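/- For every LPP2 probabilistic formula A there exist K ≥ 1, natural numbers l_1, …, l_K, relations op_{ij} ∈ {≥, <}, rationals s_{ij} ∈ ℚ ∩ [0,1], and propositional formulas α^{ij}, each of which is a disjunction of elements of cpnb(A), such that for every LPP2-model R: R ⊨ A if and only if R ⊨ ⋁_{i=1}^{K} ⋀_{j=1}^{l_i} P_{op_{ij} s_{ij}}(α^{ij}), where P_{< s}α abbreviates ¬P_{≥ s}α. -/

import Mathlib

/-- Propositional formulas over a countable set of atomic propositions
(indexed by `ℕ`): `α ::= p | ¬α | α ∧ α`. -/
inductive PropForm : Type where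
  | atom : ℕ → PropForm
  | neg : PropForm → PropForm
  | conj : PropForm → PropForm → PropForm
deriving DecidableEq

/-- The classical extension `v̄` of an evaluation `v : Prop → {true, false}`. -/
def PropForm.eval (v : ℕ → Bool) : PropForm → Bool
  | .atom p => v p
  | .neg α => !(PropForm.eval v α)
  | .conj α β => PropForm.eval v α && PropForm.eval v β

/-- The list of atomic propositions occurring in a propositional formula. -/
def PropForm.atomList : PropForm → List ℕ
  | .atom p => [p]
  | .neg α => α.atomList
  | .conj α β => α.atomList ++ β.atomList

/-- Conjunction of a nonempty list of propositional formulas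
(the value on `[]` is an irrelevant dummy). -/
def conjListProp : List PropForm → PropForm
  | [] => .atom 0
  | [a] => a
  | a :: l => .conj a (conjListProp l)

/-- The literal `±p` determined by a sign function `σ`. -/
def signedLit (σ : ℕ → Bool) (p : ℕ) : PropForm :=
  if σ p then .atom p else .neg (.atom p)

/-- `cpnb A`: the set of conjunctions of positive and negative basic formulas of `A`,
i.e. all formulas of the form `⋀_{p basic subformula of A} ±p`, with exactly one
(signed) conjunct for each basic subformula (= atomic proposition) of `A`. -/
def cpnb (A : PropForm) : Set PropForm :=
  {a | ∃ σ : ℕ → Bool, a = conjListProp (A.atomList.dedup.map (signedLit σ))}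

/-- Rationals in the unit interval `ℚ ∩ [0,1]`. -/
abbrev Prob01 : Type := {s : ℚ // 0 ≤ s ∧ s ≤ 1}

/-- The probabilistic formulas of LPP2 (the non-iterated probabilistic logic over
classical propositional logic): `A ::= P_{≥s} α | ¬A | A ∧ A` with `s ∈ ℚ ∩ [0,1]`
and `α` a propositional formula. -/
inductive PForm : Type where
  | geq : Prob01 → PropForm → PForm
  | neg : PForm → PForm
  | conj : PForm → PForm → PForm

/-- An LPP2-model `⟨W, H, μ, v⟩` (data part): `W` a nonempty set of worlds, `H` a
family of subsets of `W`, `μ` a set function, and `v` an evaluation at each world. -/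
structure LPP2Model where
  W : Type
  ne : Nonempty W
  H : Set (Set W)
  μ : Set W → ℝ
  v : W → ℕ → Bool

/-- `[α]_M = {w ∈ W | v̄_w(α) = true}`. -/
def LPP2Model.truthSet (M : LPP2Model) (α : PropForm) : Set M.W :=
  {w | PropForm.eval (M.v w) α = true}

/-- `M` is an LPP2-model: `H` is a σ-algebra over `W`, `μ : H → [0,1]` is a
σ-additive measure with `μ(W) = 1`, and `[α]_M ∈ H` for every propositional `α`. -/
structure IsLPP2Model (M : LPP2Model) : Prop where
  univ_mem : Set.univ ∈ M.H
  compl_mem : ∀ V ∈ M.H, Vᶜ ∈ M.H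
  iUnion_mem : ∀ f : ℕ → Set M.W, (∀ k, f k ∈ M.H) → (⋃ k, f k) ∈ M.H
  nonneg : ∀ V ∈ M.H, 0 ≤ M.μ V
  le_one : ∀ V ∈ M.H, M.μ V ≤ 1
  total : M.μ Set.univ = 1
  sigma_additive : ∀ f : ℕ → Set M.W, (∀ k, f k ∈ M.H) →
    Pairwise (Function.onFun Disjoint f) →
    HasSum (fun k => M.μ (f k)) (M.μ (⋃ k, f k))
  meas : ∀ α : PropForm, M.truthSet α ∈ M.H

/-- Truth of an LPP2 probabilistic formula in a model:
`M ⊨ P_{≥s} α` iff `μ([α]_M) ≥ s`; `¬` and `∧` are classical. -/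
def PForm.sat (M : LPP2Model) : PForm → Prop
  | .geq s α => (s.1 : ℝ) ≤ M.μ (M.truthSet α)
  | .neg A => ¬ PForm.sat M A
  | .conj A B => PForm.sat M A ∧ PForm.sat M B

/-- The atomic propositions occurring in an LPP2 formula (these are exactly its
basic subformulas). -/
def PForm.atomList : PForm → List ℕ
  | .geq _ α => α.atomList
  | .neg A => A.atomList
  | .conj A B => A.atomList ++ B.atomList

/-- `cpnbP A`: the conjunctions of positive and negative basic formulas of the
LPP2 formula `A`, i.e. all propositional formulas `⋀_{p basic subformula of A} ±p`. -/
def cpnbP (A : PForm) : Set PropForm :=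
  {a | ∃ σ : ℕ → Bool, a = conjListProp (A.atomList.dedup.map (signedLit σ))}

/-- Disjunction `α ∨ β := ¬(¬α ∧ ¬β)` of propositional formulas. -/
def PropForm.disj (α β : PropForm) : PropForm := .neg (.conj (.neg α) (.neg β))

/-- Disjunction of a nonempty list of propositional formulas (dummy value on `[]`). -/
def disjListProp : List PropForm → PropForm
  | [] => .atom 0
  | [a] => a
  | a :: l => PropForm.disj a (disjListProp l)

/-- Disjunction `A ∨ B := ¬(¬A ∧ ¬B)` of LPP2 formulas. -/
def PForm.disj (A B : PForm) : PForm := .neg (.conj (.neg A) (.neg B))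

/-- Conjunction of a nonempty list of LPP2 formulas (dummy value on `[]`). -/
def conjListPF : List PForm → PForm
  | [] => .geq ⟨1, by norm_num⟩ (.atom 0)
  | [A] => A
  | A :: l => .conj A (conjListPF l)

/-- Disjunction of a nonempty list of LPP2 formulas (dummy value on `[]`). -/
def disjListPF : List PForm → PForm
  | [] => .geq ⟨1, by norm_num⟩ (.atom 0)
  | [A] => A
  | A :: l => PForm.disj A (disjListPF l)

/-- The probabilistic literal `P_{op s}(α)` where `op` is `≥` (for `true`) or `<`
(for `false`); `P_{<s} α` abbreviates `¬P_{≥s} α`. -/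
def probLit (x : Bool × Prob01 × PropForm) : PForm :=
  if x.1 then .geq x.2.1 x.2.2 else .neg (.geq x.2.1 x.2.2)

/-!
Fix the list `L` of atoms of `A`. Every propositional `α` over `L` is equivalent, world by
world, to the disjunction of the minterms over `L` of its satisfying assignments; this
disjunction is a disjunction of elements of `cpnb(A)`, unless `α` is unsatisfiable, in which
case `μ([α]) = 0` and `P_{≥s} α` is equivalent to `P_{≥0} β` (when `s = 0`) or to its negation
(when `s > 0`) for any `β ∈ cpnb(A)`. After this replacement, `A` is a Boolean combination of
probabilistic literals over `cpnb(A)`, which is put into disjunctive normal form by pushing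
negations down to the literals and distributing `∧` over `∨`.
-/

namespace PropForm

theorem atomList_ne_nil (α : PropForm) : α.atomList ≠ [] := by
  induction α <;> simp_all [atomList]

theorem eval_congr {v v' : ℕ → Bool} {α : PropForm} (h : ∀ p ∈ α.atomList, v p = v' p) :
    α.eval v = α.eval v' := by
  induction α with
  | atom p => exact h p (by simp [atomList])
  | neg α ih => simp only [eval, ih h]
  | conj α β ihα ihβ =>
    simp only [atomList, List.mem_append] at h
    simp only [eval, ihα fun p hp => h p (.inl hp), ihβ fun p hp => h p (.inr hp)]

end PropForm

theorem eval_conjListProp (v : ℕ → Bool) :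
    ∀ {l : List PropForm}, l ≠ [] → ((conjListProp l).eval v = true ↔ ∀ a ∈ l, a.eval v = true)
  | [a], _ => by simp [conjListProp]
  | a :: b :: l, _ => by
    simp [conjListProp, PropForm.eval, eval_conjListProp v (List.cons_ne_nil b l)]

theorem eval_disjListProp (v : ℕ → Bool) :
    ∀ {l : List PropForm}, l ≠ [] → ((disjListProp l).eval v = true ↔ ∃ a ∈ l, a.eval v = true)
  | [a], _ => by simp [disjListProp]
  | a :: b :: l, _ => by
    simp [disjListProp, PropForm.disj, PropForm.eval, eval_disjListProp v (List.cons_ne_nil b l)]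

theorem sat_conjListPF (M : LPP2Model) :
    ∀ {l : List PForm}, l ≠ [] → (PForm.sat M (conjListPF l) ↔ ∀ B ∈ l, PForm.sat M B)
  | [B], _ => by simp [conjListPF]
  | B :: C :: l, _ => by
    simp [conjListPF, PForm.sat, sat_conjListPF M (List.cons_ne_nil C l)]

theorem sat_disjListPF (M : LPP2Model) :
    ∀ {l : List PForm}, l ≠ [] → (PForm.sat M (disjListPF l) ↔ ∃ B ∈ l, PForm.sat M B)
  | [B], _ => by simp [disjListPF]
  | B :: C :: l, _ => by
    simp only [disjListPF, PForm.disj, PForm.sat, sat_disjListPF M (List.cons_ne_nil C l),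
      List.exists_mem_cons_iff, not_and_or, not_not]

def minterm (L : List ℕ) (σ : ℕ → Bool) : PropForm :=
  conjListProp (L.map (signedLit σ))

theorem eval_minterm {L : List ℕ} (hL : L ≠ []) (σ v : ℕ → Bool) :
    (minterm L σ).eval v = true ↔ ∀ p ∈ L, v p = σ p := by
  rw [minterm, eval_conjListProp v (by simpa using hL), List.forall_mem_map]
  refine forall₂_congr fun p _ => ?_
  cases h : σ p <;> simp [signedLit, h, PropForm.eval]

/-- An assignment is encoded by the sublist of `L` of the atoms it makes true. -/
def fullDNF (L : List ℕ) (α : PropForm) : List PropForm :=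
  (L.sublists.filter fun S => α.eval (· ∈ S)).map fun S => minterm L (· ∈ S)

theorem exists_minterm_of_mem_fullDNF {L : List ℕ} {α d : PropForm} (hd : d ∈ fullDNF L α) :
    ∃ σ, d = minterm L σ := by
  obtain ⟨S, -, rfl⟩ := List.mem_map.mp hd
  exact ⟨_, rfl⟩

theorem eval_eq_true_iff_exists_mem_fullDNF {L : List ℕ} {α : PropForm} (hα : α.atomList ⊆ L)
    (v : ℕ → Bool) : α.eval v = true ↔ ∃ d ∈ fullDNF L α, d.eval v = true := by
  have hL : L ≠ [] := fun h => α.atomList_ne_nil (List.subset_nil.mp (h ▸ hα))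
  simp only [fullDNF, List.mem_map, List.mem_filter, List.mem_sublists,
    exists_exists_and_eq_and, eval_minterm hL]
  constructor
  · intro hv
    have hagree : ∀ p ∈ L, v p = decide (p ∈ L.filter v) := fun p hp => by simp [hp]
    refine ⟨L.filter v, ⟨List.filter_sublist, ?_⟩, hagree⟩
    rwa [← PropForm.eval_congr fun p hp => hagree p (hα hp)]
  · rintro ⟨S, ⟨-, hS⟩, hagree⟩
    rwa [PropForm.eval_congr fun p hp => hagree p (hα hp)]

namespace IsLPP2Model

variable {M : LPP2Model}

theorem μ_empty (hM : IsLPP2Model M) : M.μ ∅ = 0 := by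
  have hempty : (∅ : Set M.W) ∈ M.H := by simpa using hM.compl_mem _ hM.univ_mem
  have hsum := hM.sigma_additive (fun _ => ∅) (fun _ => hempty) fun _ _ _ => disjoint_bot_left
  exact (summable_const_iff _).mp hsum.summable

theorem μ_truthSet_nonneg (hM : IsLPP2Model M) (α : PropForm) : 0 ≤ M.μ (M.truthSet α) :=
  hM.nonneg _ (hM.meas α)

end IsLPP2Model

theorem LPP2Model.truthSet_eq_empty_of_fullDNF_eq_nil (M : LPP2Model) {L : List ℕ}
    {α : PropForm} (hα : α.atomList ⊆ L) (h : fullDNF L α = []) : M.truthSet α = ∅ := by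
  ext w
  simp [LPP2Model.truthSet, eval_eq_true_iff_exists_mem_fullDNF hα, h]

theorem LPP2Model.truthSet_disjListProp_fullDNF (M : LPP2Model) {L : List ℕ} {α : PropForm}
    (hα : α.atomList ⊆ L) (h : fullDNF L α ≠ []) :
    M.truthSet (disjListProp (fullDNF L α)) = M.truthSet α := by
  ext w
  simp [LPP2Model.truthSet, eval_eq_true_iff_exists_mem_fullDNF hα, eval_disjListProp _ h]

abbrev ProbLit : Type := Bool × Prob01 × PropForm

def negLit (x : ProbLit) : ProbLit := (!x.1, x.2)

theorem sat_probLit_negLit (M : LPP2Model) (x : ProbLit) :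
    PForm.sat M (probLit (negLit x)) ↔ ¬ PForm.sat M (probLit x) := by
  obtain ⟨_ | _, _⟩ := x <;> simp [probLit, negLit, PForm.sat]

/-- An unsatisfiable `α` has probability `0` and `P_{≥0} β` is valid, so `P_{≥s} α` is then
expressed as `P_{≥0} β` or its negation according as `s = 0` or not. -/
def normLit (L : List ℕ) (s : Prob01) (α : PropForm) : ProbLit :=
  if fullDNF L α = [] then (decide (s.1 = 0), ⟨0, le_rfl, zero_le_one⟩, minterm L fun _ => true)
  else (true, s, disjListProp (fullDNF L α))

theorem exists_disjListProp_minterm_eq_normLit (L : List ℕ) (s : Prob01) (α : PropForm) :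
    ∃ ds : List PropForm, ds ≠ [] ∧ (∀ d ∈ ds, ∃ σ, d = minterm L σ) ∧
      (normLit L s α).2.2 = disjListProp ds := by
  unfold normLit
  split_ifs with h
  · exact ⟨[minterm L fun _ => true], List.cons_ne_nil _ _, by simp, rfl⟩
  · exact ⟨fullDNF L α, h, fun d => exists_minterm_of_mem_fullDNF, rfl⟩

theorem sat_probLit_normLit {M : LPP2Model} (hM : IsLPP2Model M) {L : List ℕ} {α : PropForm}
    (hα : α.atomList ⊆ L) (s : Prob01) :
    PForm.sat M (probLit (normLit L s α)) ↔ PForm.sat M (.geq s α) := by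
  unfold normLit
  split_ifs with h
  · have hs : (s.1 : ℝ) ≤ 0 ↔ s.1 = 0 := by exact_mod_cast s.2.1.ge_iff_eq'
    by_cases h0 : s.1 = 0 <;>
      simp [probLit, PForm.sat, h0, hs, M.truthSet_eq_empty_of_fullDNF_eq_nil hα h,
        hM.μ_empty, hM.μ_truthSet_nonneg]
  · simp [probLit, PForm.sat, M.truthSet_disjListProp_fullDNF hα h]

/-- A DNF is encoded as its list of clauses, a clause as its list of literals. -/
def SatDNF (M : LPP2Model) (D : List (List ProbLit)) : Prop :=
  ∃ c ∈ D, ∀ x ∈ c, PForm.sat M (probLit x)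

def ProperDNF (D : List (List ProbLit)) : Prop :=
  D ≠ [] ∧ ∀ c ∈ D, c ≠ []

def dnfAnd (D E : List (List ProbLit)) : List (List ProbLit) :=
  D.flatMap fun c => E.map (c ++ ·)

section DNF

variable {D E : List (List ProbLit)}

theorem mem_dnfAnd {c : List ProbLit} : c ∈ dnfAnd D E ↔ ∃ d ∈ D, ∃ e ∈ E, c = d ++ e := by
  simp [dnfAnd, eq_comm]

theorem ProperDNF.dnfAnd (hD : ProperDNF D) (hE : ProperDNF E) : ProperDNF (dnfAnd D E) := by
  obtain ⟨d, hd⟩ := List.exists_mem_of_ne_nil _ hD.1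
  obtain ⟨e, he⟩ := List.exists_mem_of_ne_nil _ hE.1
  refine ⟨List.ne_nil_of_mem (mem_dnfAnd.mpr ⟨d, hd, e, he, rfl⟩), fun c hc => ?_⟩
  obtain ⟨d, hd, e, -, rfl⟩ := mem_dnfAnd.mp hc
  simp [hD.2 d hd]

theorem ProperDNF.append (hD : ProperDNF D) (hE : ProperDNF E) : ProperDNF (D ++ E) :=
  ⟨by simp [hD.1], fun c hc => (List.mem_append.mp hc).elim (hD.2 c) (hE.2 c)⟩

variable (M : LPP2Model)

theorem satDNF_dnfAnd : SatDNF M (dnfAnd D E) ↔ SatDNF M D ∧ SatDNF M E := by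
  simp only [SatDNF, mem_dnfAnd]
  constructor
  · rintro ⟨_, ⟨d, hd, e, he, rfl⟩, h⟩
    simp only [List.forall_mem_append] at h
    exact ⟨⟨d, hd, h.1⟩, ⟨e, he, h.2⟩⟩
  · rintro ⟨⟨d, hd, hd'⟩, ⟨e, he, he'⟩⟩
    exact ⟨d ++ e, ⟨d, hd, e, he, rfl⟩, List.forall_mem_append.mpr ⟨hd', he'⟩⟩

theorem satDNF_append : SatDNF M (D ++ E) ↔ SatDNF M D ∨ SatDNF M E := by
  simp only [SatDNF, List.mem_append, or_and_right, exists_or]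

theorem sat_disjListPF_conjListPF (hD : ProperDNF D) :
    PForm.sat M (disjListPF (D.map fun c => conjListPF (c.map probLit))) ↔ SatDNF M D := by
  rw [sat_disjListPF M (by simpa using hD.1)]
  simp only [List.mem_map, exists_exists_and_eq_and, SatDNF]
  refine exists_congr fun c => and_congr_right fun hc => ?_
  rw [sat_conjListPF M (by simpa using hD.2 c hc), List.forall_mem_map]

end DNF

namespace PForm

/-- The DNF of `B` (if `b`) or of `¬B` (if `!b`), each atom `P_{≥s} α` becoming the literal
`f s α`. -/
def dnf (f : Prob01 → PropForm → ProbLit) : Bool → PForm → List (List ProbLit)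
  | b, .geq s α => [[if b then f s α else negLit (f s α)]]
  | b, .neg B => dnf f (!b) B
  | b, .conj B C =>
    if b then dnfAnd (dnf f true B) (dnf f true C) else dnf f false B ++ dnf f false C

variable (f : Prob01 → PropForm → ProbLit)

theorem properDNF_dnf (b : Bool) (B : PForm) : ProperDNF (B.dnf f b) := by
  induction B generalizing b with
  | geq s α => cases b <;> simp [dnf, ProperDNF]
  | neg B ih => exact ih !b
  | conj B C ihB ihC =>
    cases b
    · exact (ihB false).append (ihC false)
    · exact (ihB true).dnfAnd (ihC true)

theorem exists_formula_eq_of_mem_dnf {b : Bool} {B : PForm} {c : List ProbLit} {x : ProbLit}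
    (hc : c ∈ B.dnf f b) (hx : x ∈ c) : ∃ s α, x.2.2 = (f s α).2.2 := by
  induction B generalizing b c with
  | geq s α => exact ⟨s, α, by cases b <;> simp_all [dnf, negLit]⟩
  | neg B ih => exact ih hc hx
  | conj B C ihB ihC =>
    cases b
    · exact (List.mem_append.mp hc).elim (ihB · hx) (ihC · hx)
    · obtain ⟨d, hd, e, he, rfl⟩ := mem_dnfAnd.mp hc
      exact (List.mem_append.mp hx).elim (ihB hd) (ihC he)

theorem satDNF_dnf {M : LPP2Model} {B : PForm}
    (hf : ∀ s α, α.atomList ⊆ B.atomList → (sat M (probLit (f s α)) ↔ sat M (.geq s α)))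
    (b : Bool) : SatDNF M (B.dnf f b) ↔ (B.sat M ↔ b) := by
  induction B generalizing b with
  | geq s α =>
    simp only [dnf, SatDNF, List.mem_singleton, exists_eq_left, forall_eq]
    cases b <;> simp [sat_probLit_negLit, hf s α (List.Subset.refl _)]
  | neg B ih => cases b <;> simp [dnf, sat, ih hf]
  | conj B C ihB ihC =>
    have hB := ihB fun s α h => hf s α (List.Subset.trans h (List.subset_append_left _ _))
    have hC := ihC fun s α h => hf s α (List.Subset.trans h (List.subset_append_right _ _))
    cases b <;> simp [dnf, sat, satDNF_append, satDNF_dnfAnd, hB, hC, imp_iff_not_or]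

end PForm

/-- For every LPP2 probabilistic formula `A` there exist `K ≥ 1`, numbers `l₁, …, l_K`,
relations `op_{ij} ∈ {≥, <}`, rationals `s_{ij} ∈ ℚ ∩ [0,1]`, and propositional
formulas `α^{ij}`, each a (nonempty) disjunction of elements of `cpnb(A)`, such that
for every LPP2-model `R`:
`R ⊨ A` iff `R ⊨ ⋁_{i=1}^{K} ⋀_{j=1}^{l_i} P_{op_{ij} s_{ij}}(α^{ij})`.
Here the data of the double family is packaged as a nonempty list `parts` of
nonempty lists of triples `(op, s, α)`. -/
theorem lpp2_equiv_dnf_over_cpnb (A : PForm) :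
    ∃ parts : List (List (Bool × Prob01 × PropForm)),
      parts ≠ [] ∧
      (∀ part ∈ parts, part ≠ []) ∧
      (∀ part ∈ parts, ∀ x ∈ part, ∃ ds : List PropForm,
        ds ≠ [] ∧ (∀ d ∈ ds, d ∈ cpnbP A) ∧ x.2.2 = disjListProp ds) ∧
      (∀ M : LPP2Model, IsLPP2Model M →
        (PForm.sat M A ↔
          PForm.sat M (disjListPF (parts.map fun part => conjListPF (part.map probLit))))) := by
  have hA : A.atomList ⊆ A.atomList.dedup := fun _ => List.mem_dedup.mpr
  have hproper := A.properDNF_dnf (normLit A.atomList.dedup) true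
  refine ⟨A.dnf (normLit A.atomList.dedup) true, hproper.1, hproper.2, ?_, fun M hM => ?_⟩
  · intro c hc x hx
    obtain ⟨s, α, hx⟩ := A.exists_formula_eq_of_mem_dnf _ hc hx
    obtain ⟨ds, hne, hds, heq⟩ := exists_disjListProp_minterm_eq_normLit A.atomList.dedup s α
    exact ⟨ds, hne, hds, hx.trans heq⟩
  · rw [sat_disjListPF_conjListPF M hproper,
      A.satDNF_dnf _ (fun s α hα => sat_probLit_normLit hM (List.Subset.trans hα hA) s) true]
    simp
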